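/- arXiv:2409.15074 — 3 statements merged into one kernel-verified Lean document; each statement's English description precedes it below -/
import Mathlib

section
/- Let τ ∈ ℂ with |τ| = 1 and let h : 𝔻 → ℂ be a holomorphic injective function which is starlike at infinity with respect to τ, i.e. Im( conj(τ) (τ - z)^2 h'(z) ) ≥ 0 for all z ∈ 𝔻. For w ∈ 𝔻 let T_w(z) = (w - z)/(1 - conj(w) z) be the disk automorphism interchanging w and 0. Then there exists a holomorphic function u : 𝔻 → ℂ with Re u(z) ≥ 0 for all z ∈ 𝔻 such that (h ∘ T_w)'(z) = i T_w(τ) · u(z) / (T_w(τ) - z)^2 for all z ∈ 𝔻. -/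
/-!
Write `σ = T_w(τ)` and `g = h ∘ T_w`. The chain rule and the Möbius identities give
`conj σ (σ - z)² g'(z) = c · conj τ (τ - T_w z)² h'(T_w z)` with `c = (1 - |w|²) / |1 - conj w τ|² > 0`,
so `g` is again starlike at infinity, now with respect to `σ`. For such a `g`,
`u(z) = -i conj σ (σ - z)² g'(z)` has `Re u = Im (conj σ (σ - z)² g'(z)) ≥ 0`, and `σ conj σ = 1`
turns the definition of `u` into `g'(z) = i σ u(z) / (σ - z)²`.
-/

open Metric MeasureTheory Set

open Complex ComplexConjugate

noncomputable def diskAut (w z : ℂ) : ℂ := (w - z) / (1 - conj w * z)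

def IsStarlikeAtInfinity (f : ℂ → ℂ) (τ : ℂ) : Prop :=
  ∀ z ∈ ball (0 : ℂ) 1, 0 ≤ (conj τ * (τ - z) ^ 2 * deriv f z).im

section diskAut

variable {w z : ℂ}

theorem one_sub_conj_mul_ne_zero (hw : ‖w‖ < 1) (hz : ‖z‖ ≤ 1) : 1 - conj w * z ≠ 0 := by
  have : ‖conj w * z‖ < 1 := by
    rw [norm_mul, Complex.norm_conj]
    nlinarith [norm_nonneg w, norm_nonneg z]
  intro h
  rw [← sub_eq_zero.mp h, norm_one] at this
  exact lt_irrefl 1 this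

theorem normSq_one_sub_conj_mul_sub_normSq_sub :
    normSq (1 - conj w * z) - normSq (w - z) = (1 - normSq w) * (1 - normSq z) := by
  simp only [normSq_apply, sub_re, sub_im, mul_re, mul_im, conj_re, conj_im, one_re, one_im]
  ring

theorem norm_diskAut_lt_one (hw : ‖w‖ < 1) (hz : ‖z‖ < 1) : ‖diskAut w z‖ < 1 := by
  have hd := one_sub_conj_mul_ne_zero hw hz.le
  rw [diskAut, norm_div, div_lt_one (norm_pos_iff.mpr hd), ← sq_lt_sq₀ (norm_nonneg _)
    (norm_nonneg _), Complex.sq_norm, Complex.sq_norm, ← sub_pos,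
    normSq_one_sub_conj_mul_sub_normSq_sub, normSq_eq_norm_sq w, normSq_eq_norm_sq z]
  have hw2 : ‖w‖ ^ 2 < 1 := by nlinarith [norm_nonneg w]
  have hz2 : ‖z‖ ^ 2 < 1 := by nlinarith [norm_nonneg z]
  exact mul_pos (sub_pos.mpr hw2) (sub_pos.mpr hz2)

theorem norm_diskAut_eq_one (hw : ‖w‖ < 1) (hz : ‖z‖ = 1) : ‖diskAut w z‖ = 1 := by
  have hd := one_sub_conj_mul_ne_zero hw hz.le
  rw [diskAut, norm_div, div_eq_one_iff_eq (norm_ne_zero_iff.mpr hd), ← sq_eq_sq₀ (norm_nonneg _)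
    (norm_nonneg _), Complex.sq_norm, Complex.sq_norm, eq_comm, ← sub_eq_zero,
    normSq_one_sub_conj_mul_sub_normSq_sub, normSq_eq_norm_sq z, hz]
  ring

theorem mapsTo_diskAut (hw : ‖w‖ < 1) : MapsTo (diskAut w) (ball 0 1) (ball 0 1) := fun _ hζ ↦
  mem_ball_zero_iff.mpr (norm_diskAut_lt_one hw (mem_ball_zero_iff.mp hζ))

theorem hasDerivAt_diskAut (hd : 1 - conj w * z ≠ 0) :
    HasDerivAt (diskAut w) ((w * conj w - 1) / (1 - conj w * z) ^ 2) z := by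
  have := ((hasDerivAt_id' z).const_sub w).div
    (((hasDerivAt_id' z).const_mul (conj w)).const_sub 1) hd
  exact this.congr_deriv (by ring)

theorem differentiableOn_diskAut (hw : ‖w‖ < 1) : DifferentiableOn ℂ (diskAut w) (ball 0 1) :=
  fun _ hζ ↦ (hasDerivAt_diskAut (one_sub_conj_mul_ne_zero hw
    (mem_ball_zero_iff.mp hζ).le)).differentiableAt.differentiableWithinAt

theorem conj_mul_sq_mul_deriv_diskAut {τ : ℂ} (hw : ‖w‖ < 1) (hz : ‖z‖ < 1) (hτ : ‖τ‖ = 1) :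
    conj (diskAut w τ) * (diskAut w τ - z) ^ 2 * ((w * conj w - 1) / (1 - conj w * z) ^ 2) =
      ((1 - ‖w‖ ^ 2) / ‖1 - conj w * τ‖ ^ 2 : ℝ) * (conj τ * (τ - diskAut w z) ^ 2) := by
  have hτ0 : τ ≠ 0 := norm_ne_zero_iff.mp (by rw [hτ]; exact one_ne_zero)
  have hconj : conj τ = τ⁻¹ := by
    rw [Complex.inv_def, normSq_eq_norm_sq, hτ]; simp
  have hdz := one_sub_conj_mul_ne_zero hw hz.le
  have hdτ := one_sub_conj_mul_ne_zero hw hτ.le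
  have hdτ' : 1 - w * τ⁻¹ ≠ 0 := by
    rw [← hconj]; simpa using (map_ne_zero conj).mpr hdτ
  push_cast
  rw [← Complex.mul_conj', ← Complex.mul_conj']
  simp only [diskAut, map_div₀, map_sub, map_mul, Complex.conj_conj, map_one, hconj]
  field_simp
  ring

end diskAut

namespace IsStarlikeAtInfinity

variable {f : ℂ → ℂ} {τ w : ℂ}

theorem comp_diskAut (hs : IsStarlikeAtInfinity f τ) (hf : DifferentiableOn ℂ f (ball 0 1))
    (hτ : ‖τ‖ = 1) (hw : ‖w‖ < 1) :
    IsStarlikeAtInfinity (f ∘ diskAut w) (diskAut w τ) := by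
  intro z hz
  have hz' : ‖z‖ < 1 := mem_ball_zero_iff.mp hz
  have hζ : diskAut w z ∈ ball (0 : ℂ) 1 := mapsTo_diskAut hw hz
  have hchain : deriv (f ∘ diskAut w) z =
      deriv f (diskAut w z) * ((w * conj w - 1) / (1 - conj w * z) ^ 2) :=
    ((hf.differentiableAt (isOpen_ball.mem_nhds hζ)).hasDerivAt.comp z
      (hasDerivAt_diskAut (one_sub_conj_mul_ne_zero hw hz'.le))).deriv
  have hc : 0 ≤ (1 - ‖w‖ ^ 2) / ‖1 - conj w * τ‖ ^ 2 := by
    have : ‖w‖ ^ 2 < 1 := by nlinarith [norm_nonneg w]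
    positivity
  calc (0 : ℝ) ≤ (1 - ‖w‖ ^ 2) / ‖1 - conj w * τ‖ ^ 2 *
        (conj τ * (τ - diskAut w z) ^ 2 * deriv f (diskAut w z)).im :=
        mul_nonneg hc (hs _ hζ)
    _ = _ := by
      rw [← im_ofReal_mul, hchain, ← mul_assoc, ← conj_mul_sq_mul_deriv_diskAut hw hz' hτ]
      congr 1
      ring

theorem exists_deriv_eq (hs : IsStarlikeAtInfinity f τ) (hf : DifferentiableOn ℂ f (ball 0 1))
    (hτ : ‖τ‖ = 1) :
    ∃ u : ℂ → ℂ, DifferentiableOn ℂ u (ball 0 1) ∧ (∀ z ∈ ball (0 : ℂ) 1, 0 ≤ (u z).re) ∧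
      ∀ z ∈ ball (0 : ℂ) 1, deriv f z = I * τ * u z / (τ - z) ^ 2 := by
  have hττ : τ * conj τ = 1 := by rw [Complex.mul_conj', hτ]; norm_num
  refine ⟨fun z ↦ -I * (conj τ * (τ - z) ^ 2 * deriv f z), ?_, fun z hz ↦ ?_, fun z hz ↦ ?_⟩
  · have hf' := (hf.analyticOnNhd isOpen_ball).deriv.differentiableOn
    fun_prop
  · simpa using hs z hz
  · have hτz : τ - z ≠ 0 := by
      intro h
      rw [← sub_eq_zero.mp h, mem_ball_zero_iff, hτ] at hz
      exact lt_irrefl 1 hz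
    rw [eq_div_iff (pow_ne_zero 2 hτz)]
    linear_combination (-(τ - z) ^ 2 * deriv f z) * hττ +
      (τ * conj τ * (τ - z) ^ 2 * deriv f z) * I_mul_I

end IsStarlikeAtInfinity

theorem starlike_composition_derivative_general
    (τ : ℂ) (hτ : ‖τ‖ = 1)
    (h : ℂ → ℂ)
    (hholo : DifferentiableOn ℂ h (ball (0:ℂ) 1))
    (hstar : ∀ z ∈ ball (0:ℂ) 1, 0 ≤ ((starRingEnd ℂ) τ * (τ - z) ^ 2 * deriv h z).im)
    (w : ℂ) (hw : w ∈ ball (0:ℂ) 1) :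
    ∃ u : ℂ → ℂ, DifferentiableOn ℂ u (ball (0:ℂ) 1) ∧
      (∀ z ∈ ball (0:ℂ) 1, 0 ≤ (u z).re) ∧
      ∀ z ∈ ball (0:ℂ) 1,
        deriv (fun ζ => h ((w - ζ) / (1 - (starRingEnd ℂ) w * ζ))) z =
          Complex.I * ((w - τ) / (1 - (starRingEnd ℂ) w * τ)) * u z /
            ((w - τ) / (1 - (starRingEnd ℂ) w * τ) - z) ^ 2 := by
  have hw1 : ‖w‖ < 1 := mem_ball_zero_iff.mp hw
  have hg : IsStarlikeAtInfinity (h ∘ diskAut w) (diskAut w τ) :=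
    IsStarlikeAtInfinity.comp_diskAut hstar hholo hτ hw1
  exact hg.exists_deriv_eq (hholo.comp (differentiableOn_diskAut hw1) (mapsTo_diskAut hw1))
    (norm_diskAut_eq_one hw1 hτ)

/-- If `h` is conformal on `𝔻` and starlike at infinity with respect to `τ ∈ 𝕋`,
and `T_w(z) = (w-z)/(1 - conj w · z)`, then there is a holomorphic `u` with
`Re u ≥ 0` on `𝔻` such that `(h ∘ T_w)'(z) = i T_w(τ) u(z) / (T_w(τ) - z)²`. -/
theorem starlike_composition_derivative
    (τ : ℂ) (hτ : ‖τ‖ = 1)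
    (h : ℂ → ℂ)
    (hholo : DifferentiableOn ℂ h (ball (0:ℂ) 1))
    (hinj : Set.InjOn h (ball (0:ℂ) 1))
    (hstar : ∀ z ∈ ball (0:ℂ) 1, 0 ≤ ((starRingEnd ℂ) τ * (τ - z) ^ 2 * deriv h z).im)
    (w : ℂ) (hw : w ∈ ball (0:ℂ) 1) :
    ∃ u : ℂ → ℂ, DifferentiableOn ℂ u (ball (0:ℂ) 1) ∧
      (∀ z ∈ ball (0:ℂ) 1, 0 ≤ (u z).re) ∧
      ∀ z ∈ ball (0:ℂ) 1,
        deriv (fun ζ => h ((w - ζ) / (1 - (starRingEnd ℂ) w * ζ))) z =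
          Complex.I * ((w - τ) / (1 - (starRingEnd ℂ) w * τ)) * u z /
            ((w - τ) / (1 - (starRingEnd ℂ) w * τ) - z) ^ 2 :=
  starlike_composition_derivative_general τ hτ h hholo hstar w hw
end

section
/- Let p ∈ (0,2], let w ∈ ℂ with |w| < 1, and let k ∈ ℂ with |k| = 1. Then p · Re( 2 k w / (1 - k w)^2 ) ≤ ( (4 - p) |w|^2 + p ) / |1 - k w|^2. More precisely, ( (4 - p)|w|^2 + p ) / |1 - k w|^2 - p Re( 2 k w / (1 - k w)^2 ) ≥ ( (4 - p)|w|^2 - 2 p |w| + p ) / |1 - k w|^2 ≥ 0. -/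
/-!
Since `Re z ≤ |z|` and `|2kw/(1-kw)²| = 2|w|/|1-kw|²`, the gap is at least
`((4-p)|w|² - 2p|w| + p)/|1-kw|²`, whose numerator `p(|w|-1)² + (4-2p)|w|²` is nonnegative
for `0 ≤ p ≤ 2`.
-/

lemma four_sub_mul_sq_sub_two_mul_mul_add_nonneg {p : ℝ} (hp₀ : 0 ≤ p) (hp₂ : p ≤ 2) (t : ℝ) :
    0 ≤ (4 - p) * t ^ 2 - 2 * p * t + p := by
  have hsplit : (4 - p) * t ^ 2 - 2 * p * t + p = p * (t - 1) ^ 2 + (4 - 2 * p) * t ^ 2 := by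
    ring
  rw [hsplit]
  have h₂ : 0 ≤ 4 - 2 * p := by linarith
  positivity

lemma Complex.norm_two_mul_mul_div_one_sub_sq {k : ℂ} (hk : ‖k‖ = 1) (w : ℂ) :
    ‖2 * k * w / (1 - k * w) ^ 2‖ = 2 * ‖w‖ / ‖1 - k * w‖ ^ 2 := by
  rw [norm_div, norm_mul, norm_mul, norm_pow, Complex.norm_two, hk, mul_one]

theorem lowner_key_inequality_general
    (p : ℝ) (hp₁ : 0 < p) (hp₂ : p ≤ 2)
    (w : ℂ)
    (k : ℂ) (hk : ‖k‖ = 1) :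
    p * (2 * k * w / (1 - k * w) ^ 2).re
        ≤ ((4 - p) * ‖w‖ ^ 2 + p) / ‖1 - k * w‖ ^ 2 ∧
    ((4 - p) * ‖w‖ ^ 2 - 2 * p * ‖w‖ + p) / ‖1 - k * w‖ ^ 2
        ≤ ((4 - p) * ‖w‖ ^ 2 + p) / ‖1 - k * w‖ ^ 2 -
            p * (2 * k * w / (1 - k * w) ^ 2).re ∧
    0 ≤ ((4 - p) * ‖w‖ ^ 2 - 2 * p * ‖w‖ + p) /
          ‖1 - k * w‖ ^ 2 := by
  have hre : p * (2 * k * w / (1 - k * w) ^ 2).re ≤ 2 * p * ‖w‖ / ‖1 - k * w‖ ^ 2 :=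
    calc p * (2 * k * w / (1 - k * w) ^ 2).re
        ≤ p * ‖2 * k * w / (1 - k * w) ^ 2‖ :=
          mul_le_mul_of_nonneg_left (Complex.re_le_norm _) hp₁.le
      _ = 2 * p * ‖w‖ / ‖1 - k * w‖ ^ 2 := by
          rw [Complex.norm_two_mul_mul_div_one_sub_sq hk]; ring
  have hgap : ((4 - p) * ‖w‖ ^ 2 - 2 * p * ‖w‖ + p) / ‖1 - k * w‖ ^ 2
      = ((4 - p) * ‖w‖ ^ 2 + p) / ‖1 - k * w‖ ^ 2 - 2 * p * ‖w‖ / ‖1 - k * w‖ ^ 2 := by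
    ring
  have hnonneg : 0 ≤ ((4 - p) * ‖w‖ ^ 2 - 2 * p * ‖w‖ + p) / ‖1 - k * w‖ ^ 2 :=
    div_nonneg (four_sub_mul_sq_sub_two_mul_mul_add_nonneg hp₁.le hp₂ _) (by positivity)
  exact ⟨by linarith, by linarith, hnonneg⟩

/-- The elementary estimate underlying the Löwner-chain monotonicity: for
`p ∈ (0,2]`, `|w| < 1` and `|k| = 1`,
`p Re(2kw/(1-kw)²) ≤ ((4-p)|w|² + p)/|1-kw|²`, and more precisely
`((4-p)|w|² + p)/|1-kw|² - p Re(2kw/(1-kw)²) ≥ ((4-p)|w|² - 2p|w| + p)/|1-kw|² ≥ 0`. -/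
theorem lowner_key_inequality
    (p : ℝ) (hp₁ : 0 < p) (hp₂ : p ≤ 2)
    (w : ℂ) (hw : ‖w‖ < 1)
    (k : ℂ) (hk : ‖k‖ = 1) :
    p * (2 * k * w / (1 - k * w) ^ 2).re
        ≤ ((4 - p) * ‖w‖ ^ 2 + p) / ‖1 - k * w‖ ^ 2 ∧
    ((4 - p) * ‖w‖ ^ 2 - 2 * p * ‖w‖ + p) / ‖1 - k * w‖ ^ 2
        ≤ ((4 - p) * ‖w‖ ^ 2 + p) / ‖1 - k * w‖ ^ 2 -
            p * (2 * k * w / (1 - k * w) ^ 2).re ∧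
    0 ≤ ((4 - p) * ‖w‖ ^ 2 - 2 * p * ‖w‖ + p) /
          ‖1 - k * w‖ ^ 2 :=
  lowner_key_inequality_general p hp₁ hp₂ w k hk
end

section
/- Let T > 0, let k : [0,T] → ℂ be continuous with |k(t)| = 1 for all t, and let (φ_t)_{t ∈ [0,T]} be a family of holomorphic injective self-maps of 𝔻 with φ_0(z) = z and φ_t(0) = 0 for all t, such that for each z ∈ 𝔻 the map t ↦ φ_t(z) is differentiable on [0,T] with ∂φ_t(z)/∂t = - φ_t(z) (1 + k(t) φ_t(z)) / (1 - k(t) φ_t(z)), and also t ↦ φ_t'(z) is differentiable with ∂φ_t'(z)/∂t equal to the z-derivative of the right-hand side. Then for every p ∈ (0,2) and every z ∈ 𝔻 with z ≠ 0, the function t ↦ |φ_t'(z)|^{-p} |φ_t(z)|^{2p} / (1 - |φ_t(z)|^2)^2 is nonincreasing on [0,T]; in particular |φ_T'(z)|^{-p} |φ_T(z)/z|^{2p} / (1 - |φ_T(z)|^2)^2 ≤ (1 - |z|^2)^{-2}. -/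
/-
Write `w = φ_t(z)`, `W = φ_t'(z)` and `u = k(t) w`, so `|u| = |w| < 1`. With the Herglotz kernel
`H(u) = (1 + u)/(1 - u)` the Löwner equation reads `w' = -w H(u)`, and differentiating it in `z`
gives `W' = W D(u)` with `D(u) = -(H(u) + 2u/(1 - u)²)`. Hence the logarithm of
`|W|^{-p} |w|^{2p} / (1 - |w|²)²` has derivative
`-p Re D(u) - 2p Re H(u) - 4|u|² Re H(u)/(1 - |u|²)`, which in terms of `c = Re u`, `s = |u|` is
`[p(2c(1 + s²) - 4s²) - (p(1 - s²) + 4s²)|1 - u|²] / |1 - u|⁴ ≤ 0` for `0 ≤ p ≤ 2`.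
The quantity is well defined along the chain: `w ≠ 0` by injectivity of `φ_t` and `φ_t(0) = 0`,
and `W ≠ 0` because `W` solves a linear ODE with continuous coefficient and `W(0) = 1`.
Comparing `t = T` with `t = 0` gives the final bound.
-/

open Metric Set

/-- At `c = s` the difference of the two sides is `(1 - s)² (p - 2ps + (4 - p)s²)`, whose second
factor has discriminant `8p(p - 2) ≤ 0`; lowering `c` only helps. -/
theorem lowner_polynomial_ineq {p c s : ℝ} (hp₀ : 0 ≤ p) (hp₂ : p ≤ 2) (hcs : c ≤ s) :
    p * (2 * c * (1 + s ^ 2) - 4 * s ^ 2)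
      ≤ (p * (1 - s ^ 2) + 4 * s ^ 2) * (1 - 2 * c + s ^ 2) := by
  have hq : 0 ≤ p - 2 * p * s + (4 - p) * s ^ 2 := by
    nlinarith [sq_nonneg ((4 - p) * s - p)]
  nlinarith [mul_nonneg (sq_nonneg (1 - s)) hq,
    mul_nonneg (by positivity : 0 ≤ 4 * p + 8 * s ^ 2) (sub_nonneg.2 hcs)]

namespace Complex

theorem normSq_one_sub (u : ℂ) : normSq (1 - u) = 1 - 2 * u.re + ‖u‖ ^ 2 := by
  rw [Complex.sq_norm, normSq_apply, normSq_apply]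
  simp only [sub_re, one_re, sub_im, one_im]
  ring

theorem re_div_one_sub_sq (u : ℂ) :
    (u / (1 - u) ^ 2).re = (u.re * (1 + ‖u‖ ^ 2) - 2 * ‖u‖ ^ 2) / normSq (1 - u) ^ 2 := by
  rw [div_re, ← add_div, map_pow, Complex.sq_norm, normSq_apply u]
  congr 1
  simp only [sq, mul_re, mul_im, sub_re, sub_im, one_re, one_im]
  ring

theorem inner_eq_sq_norm_mul_re_div (w v : ℂ) : inner ℝ w v = ‖w‖ ^ 2 * (v / w).re := by
  rcases eq_or_ne w 0 with rfl | hw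
  · simp
  rw [Complex.inner, ← re_ofReal_mul, ofReal_pow, ← mul_conj', mul_comm (w * _)]
  congr 1
  field_simp

end Complex

theorem HasDerivWithinAt.log_norm {f : ℝ → ℂ} {f' : ℂ} {s : Set ℝ} {x : ℝ}
    (hf : HasDerivWithinAt f f' s x) (hx : f x ≠ 0) :
    HasDerivWithinAt (fun t => Real.log ‖f t‖) (f' / f x).re s x := by
  have hx' : ‖f x‖ ^ 2 ≠ 0 := by positivity
  have hlog : (fun t => Real.log ‖f t‖) = fun t => Real.log (‖f t‖ ^ 2) / 2 := by
    ext t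
    rw [Real.log_pow]
    push_cast
    ring
  rw [hlog]
  refine ((hf.norm_sq.log hx').div_const 2).congr_deriv ?_
  rw [Complex.inner_eq_sq_norm_mul_re_div]
  field_simp

theorem HasDerivWithinAt.log_one_sub_sq_norm {f : ℝ → ℂ} {f' : ℂ} {s : Set ℝ} {x : ℝ}
    (hf : HasDerivWithinAt f f' s x) (hx : ‖f x‖ < 1) :
    HasDerivWithinAt (fun t => Real.log (1 - ‖f t‖ ^ 2))
      (-(2 * ‖f x‖ ^ 2 * (f' / f x).re) / (1 - ‖f x‖ ^ 2)) s x := by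
  have hx' : 1 - ‖f x‖ ^ 2 ≠ 0 := by nlinarith [norm_nonneg (f x)]
  simpa only [Complex.inner_eq_sq_norm_mul_re_div, mul_assoc]
    using (hf.norm_sq.const_sub 1).log hx'

theorem Real.rpow_neg_mul_rpow_div_sq {x y z : ℝ} (p : ℝ) (hx : 0 < x) (hy : 0 < y)
    (hz : 0 < z) :
    x ^ (-p) * y ^ (2 * p) / z ^ 2 = exp (-p * log x + 2 * p * log y - 2 * log z) := by
  rw [exp_sub, exp_add, mul_comm (-p), mul_comm (2 * p), mul_comm 2 (log z),
    ← rpow_def_of_pos hx, ← rpow_def_of_pos hy, ← rpow_def_of_pos hz, rpow_two]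

theorem ne_zero_of_hasDerivWithinAt_smul_self {E : Type*} [NormedAddCommGroup E]
    [NormedSpace ℂ E] {a b : ℝ} {c : ℝ → ℂ} {f : ℝ → E} (hc : ContinuousOn c (Icc a b))
    (hf : ∀ t ∈ Icc a b, HasDerivWithinAt f (c t • f t) (Icc a b) t) (ha : f a ≠ 0)
    {t₀ : ℝ} (ht₀ : t₀ ∈ Icc a b) : f t₀ ≠ 0 := by
  intro hft₀
  obtain ⟨C, hC⟩ := isCompact_Icc.exists_bound_of_continuousOn hc
  have hlip : ∀ t ∈ Ioc a t₀, LipschitzOnWith C.toNNReal (c t • · : E → E) univ := fun t ht =>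
    ((lipschitzWith_smul (c t)).weaken (by
      rw [← NNReal.coe_le_coe, coe_nnnorm, Real.coe_toNNReal']
      exact (hC t ⟨ht.1.le, ht.2.trans ht₀.2⟩).trans (le_max_left _ _))).lipschitzOnWith
  have hderiv : ∀ t ∈ Ioc a t₀, HasDerivWithinAt f (c t • f t) (Iic t) t := fun t ht =>
    (hf t ⟨ht.1.le, ht.2.trans ht₀.2⟩).mono_of_mem_nhdsWithin
      (Icc_mem_nhdsLE_of_mem ⟨ht.1, ht.2.trans ht₀.2⟩)
  have hcont : ContinuousOn f (Icc a t₀) := fun t ht =>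
    ((hf t ⟨ht.1, ht.2.trans ht₀.2⟩).continuousWithinAt).mono (Icc_subset_Icc_right ht₀.2)
  -- by uniqueness for the linear ODE, `f` agrees on `[a, t₀]` with the zero solution
  have hzero := ODE_solution_unique_of_mem_Icc_left hlip hcont hderiv (fun _ _ => mem_univ _)
    continuousOn_const (fun t _ => by simpa using hasDerivWithinAt_const t (Iic t) (0 : E))
    (fun _ _ => mem_univ _) hft₀
  exact ha (hzero ⟨le_rfl, ht₀.1⟩)

noncomputable def herglotz (u : ℂ) : ℂ := (1 + u) / (1 - u)

noncomputable def lownerField (k w : ℂ) : ℂ := -w * herglotz (k * w)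

noncomputable def lownerFieldDeriv (u : ℂ) : ℂ := -(herglotz u + 2 * (u / (1 - u) ^ 2))

theorem re_herglotz (u : ℂ) : (herglotz u).re = (1 - ‖u‖ ^ 2) / Complex.normSq (1 - u) := by
  rw [herglotz, Complex.div_re, ← add_div, Complex.sq_norm, Complex.normSq_apply u]
  congr 1
  simp only [Complex.add_re, Complex.sub_re, Complex.one_re, Complex.add_im, Complex.sub_im,
    Complex.one_im]
  ring

theorem re_lownerField_div (k : ℂ) {w : ℂ} (hw : w ≠ 0) :
    (lownerField k w / w).re = -(herglotz (k * w)).re := by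
  rw [lownerField, neg_mul, neg_div, mul_div_cancel_left₀ _ hw, Complex.neg_re]

theorem hasDerivAt_lownerField {k w : ℂ} (h : k * w ≠ 1) :
    HasDerivAt (lownerField k) (lownerFieldDeriv (k * w)) w := by
  have h' : 1 - k * w ≠ 0 := sub_ne_zero.2 h.symm
  have hkw : HasDerivAt (fun ζ => k * ζ) k w := by simpa using (hasDerivAt_id w).const_mul k
  refine ((hasDerivAt_id' w).neg.mul
    ((hkw.const_add 1).div (hkw.const_sub 1) h')).congr_deriv ?_
  simp only [lownerFieldDeriv, herglotz, Pi.div_apply, Pi.neg_apply]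
  field_simp
  ring

theorem deriv_lownerField_comp {f : ℂ → ℂ} {k z : ℂ} (hf : DifferentiableAt ℂ f z)
    (h : k * f z ≠ 1) :
    deriv (fun ζ => -(f ζ) * (1 + k * f ζ) / (1 - k * f ζ)) z
      = deriv f z * lownerFieldDeriv (k * f z) := by
  have hfield : (fun ζ => -(f ζ) * (1 + k * f ζ) / (1 - k * f ζ)) = lownerField k ∘ f := by
    funext ζ
    simp only [Function.comp, lownerField, herglotz, mul_div_assoc]
  rw [hfield, ((hasDerivAt_lownerField h).comp z hf.hasDerivAt).deriv, mul_comm]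

theorem continuousAt_lownerFieldDeriv {u : ℂ} (h : u ≠ 1) :
    ContinuousAt lownerFieldDeriv u := by
  have h' : 1 - u ≠ 0 := sub_ne_zero.2 h.symm
  unfold lownerFieldDeriv herglotz
  fun_prop (disch := simp [h'])

/-- The left side is the logarithmic derivative of the quantity in `antitoneOn_lowner_quantity`,
written in `u = k w`. -/
theorem lowner_logDeriv_nonpos {p : ℝ} (hp₀ : 0 ≤ p) (hp₂ : p ≤ 2) {u : ℂ} (hu : ‖u‖ < 1) :
    -p * (lownerFieldDeriv u).re - 2 * p * (herglotz u).re
      - 4 * ‖u‖ ^ 2 * (herglotz u).re / (1 - ‖u‖ ^ 2) ≤ 0 := by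
  have hs : 0 < 1 - ‖u‖ ^ 2 := by nlinarith [norm_nonneg u]
  have hm : 0 < Complex.normSq (1 - u) :=
    Complex.normSq_pos.2 (sub_ne_zero.2 (by rintro rfl; simp at hu))
  have h2 : (2 * (u / (1 - u) ^ 2)).re = 2 * (u / (1 - u) ^ 2).re := by simp
  rw [lownerFieldDeriv, Complex.neg_re, Complex.add_re, h2, re_herglotz,
    Complex.re_div_one_sub_sq]
  rw [Complex.normSq_one_sub] at hm ⊢
  have key := lowner_polynomial_ineq hp₀ hp₂ (Complex.re_le_norm u)
  calc _ = (p * (2 * u.re * (1 + ‖u‖ ^ 2) - 4 * ‖u‖ ^ 2)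
          - (p * (1 - ‖u‖ ^ 2) + 4 * ‖u‖ ^ 2) * (1 - 2 * u.re + ‖u‖ ^ 2))
          / (1 - 2 * u.re + ‖u‖ ^ 2) ^ 2 := by
        field_simp
        ring
    _ ≤ 0 := div_nonpos_of_nonpos_of_nonneg (by linarith) (by positivity)

theorem antitoneOn_lowner_quantity {D : Set ℝ} (hD : Convex ℝ D) {p : ℝ} (hp₀ : 0 ≤ p)
    (hp₂ : p ≤ 2) {k w W : ℝ → ℂ} (hk : ∀ t ∈ D, ‖k t‖ = 1)
    (hw : ∀ t ∈ D, HasDerivWithinAt w (lownerField (k t) (w t)) D t)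
    (hW : ∀ t ∈ D, HasDerivWithinAt W (W t * lownerFieldDeriv (k t * w t)) D t)
    (hw₀ : ∀ t ∈ D, w t ≠ 0) (hw₁ : ∀ t ∈ D, ‖w t‖ < 1) (hW₀ : ∀ t ∈ D, W t ≠ 0) :
    AntitoneOn (fun t => ‖W t‖ ^ (-p) * ‖w t‖ ^ (2 * p) / (1 - ‖w t‖ ^ 2) ^ 2) D := by
  have hu : ∀ t ∈ D, ‖k t * w t‖ = ‖w t‖ := fun t ht => by rw [norm_mul, hk t ht, one_mul]
  set G : ℝ → ℝ := fun t =>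
    -p * Real.log ‖W t‖ + 2 * p * Real.log ‖w t‖ - 2 * Real.log (1 - ‖w t‖ ^ 2)
  have hG : ∀ t ∈ D, HasDerivWithinAt G
      (-p * (lownerFieldDeriv (k t * w t)).re - 2 * p * (herglotz (k t * w t)).re
        - 4 * ‖k t * w t‖ ^ 2 * (herglotz (k t * w t)).re / (1 - ‖k t * w t‖ ^ 2)) D t := by
    intro t ht
    refine (((((hW t ht).log_norm (hW₀ t ht)).const_mul (-p)).add
      (((hw t ht).log_norm (hw₀ t ht)).const_mul (2 * p))).sub
      (((hw t ht).log_one_sub_sq_norm (hw₁ t ht)).const_mul 2)).congr_deriv ?_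
    rw [mul_div_cancel_left₀ _ (hW₀ t ht), re_lownerField_div _ (hw₀ t ht), hu t ht]
    ring
  have hG_anti : AntitoneOn G D :=
    antitoneOn_of_hasDerivWithinAt_nonpos hD (fun t ht => (hG t ht).continuousWithinAt)
      (fun t ht => (hG t (interior_subset ht)).mono interior_subset)
      (fun t ht => lowner_logDeriv_nonpos hp₀ hp₂
        ((hu t (interior_subset ht)).trans_lt (hw₁ t (interior_subset ht))))
  have hpos : ∀ t ∈ D, 0 < 1 - ‖w t‖ ^ 2 := fun t ht => by
    nlinarith [hw₁ t ht, norm_nonneg (w t)]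
  intro s hs t ht hst
  dsimp only
  rw [Real.rpow_neg_mul_rpow_div_sq p (norm_pos_iff.2 (hW₀ s hs)) (norm_pos_iff.2 (hw₀ s hs))
      (hpos s hs),
    Real.rpow_neg_mul_rpow_div_sq p (norm_pos_iff.2 (hW₀ t ht)) (norm_pos_iff.2 (hw₀ t ht))
      (hpos t ht)]
  exact Real.exp_le_exp.2 (hG_anti hs ht hst)

/-- Monotonicity along a Löwner chain: if `(φ_t)_{t ∈ [0,T]}` is a Löwner chain of
conformal self-maps of `𝔻` fixing `0`, driven by a continuous unimodular function
`k`, then for `p ∈ (0,2)` and `z ≠ 0` the quantity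
`|φ_t'(z)|^{-p} |φ_t(z)|^{2p} / (1-|φ_t(z)|²)²` is nonincreasing in `t`; in
particular `|φ_T'(z)|^{-p} |φ_T(z)/z|^{2p} / (1-|φ_T(z)|²)² ≤ (1-|z|²)^{-2}`. -/
theorem lowner_chain_monotone
    (T : ℝ) (hT : 0 < T)
    (k : ℝ → ℂ)
    (hkcont : ContinuousOn k (Set.Icc 0 T))
    (hkmod : ∀ t ∈ Set.Icc (0:ℝ) T, ‖k t‖ = 1)
    (φ : ℝ → ℂ → ℂ)
    (hmaps : ∀ t ∈ Set.Icc (0:ℝ) T, Set.MapsTo (φ t) (ball (0:ℂ) 1) (ball (0:ℂ) 1))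
    (hholo : ∀ t ∈ Set.Icc (0:ℝ) T, DifferentiableOn ℂ (φ t) (ball (0:ℂ) 1))
    (hinj : ∀ t ∈ Set.Icc (0:ℝ) T, Set.InjOn (φ t) (ball (0:ℂ) 1))
    (hid : ∀ z ∈ ball (0:ℂ) 1, φ 0 z = z)
    (hfix : ∀ t ∈ Set.Icc (0:ℝ) T, φ t 0 = 0)
    (hode : ∀ z ∈ ball (0:ℂ) 1, ∀ t ∈ Set.Icc (0:ℝ) T,
      HasDerivWithinAt (fun s => φ s z)
        (-(φ t z) * (1 + k t * φ t z) / (1 - k t * φ t z)) (Set.Icc 0 T) t)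
    (hode' : ∀ z ∈ ball (0:ℂ) 1, ∀ t ∈ Set.Icc (0:ℝ) T,
      HasDerivWithinAt (fun s => deriv (φ s) z)
        (deriv (fun ζ => -(φ t ζ) * (1 + k t * φ t ζ) / (1 - k t * φ t ζ)) z)
        (Set.Icc 0 T) t)
    (p : ℝ) (hp₁ : 0 < p) (hp₂ : p < 2)
    (z : ℂ) (hz : z ∈ ball (0:ℂ) 1) (hz0 : z ≠ 0) :
    AntitoneOn (fun t =>
        ‖deriv (φ t) z‖ ^ (-p) * ‖φ t z‖ ^ (2 * p) /
          (1 - ‖φ t z‖ ^ 2) ^ 2) (Set.Icc 0 T) ∧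
    ‖deriv (φ T) z‖ ^ (-p) * ‖φ T z / z‖ ^ (2 * p) /
        (1 - ‖φ T z‖ ^ 2) ^ 2
      ≤ ((1 - ‖z‖ ^ 2) ^ 2)⁻¹ := by
  have hw₁ : ∀ t ∈ Icc 0 T, ‖φ t z‖ < 1 := fun t ht => mem_ball_zero_iff.1 (hmaps t ht hz)
  have hw₀ : ∀ t ∈ Icc 0 T, φ t z ≠ 0 := fun t ht h =>
    hz0 (hinj t ht hz (mem_ball_self one_pos) (h.trans (hfix t ht).symm))
  have hu : ∀ t ∈ Icc 0 T, k t * φ t z ≠ 1 := fun t ht h => by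
    have := congrArg norm h
    rw [norm_mul, hkmod t ht, one_mul, norm_one] at this
    exact (hw₁ t ht).ne this
  have hw : ∀ t ∈ Icc 0 T,
      HasDerivWithinAt (fun s => φ s z) (lownerField (k t) (φ t z)) (Icc 0 T) t := fun t ht => by
    simpa only [lownerField, herglotz, mul_div_assoc] using hode z hz t ht
  have hW : ∀ t ∈ Icc 0 T, HasDerivWithinAt (fun s => deriv (φ s) z)
      (deriv (φ t) z * lownerFieldDeriv (k t * φ t z)) (Icc 0 T) t := fun t ht => by
    have hφ := (hholo t ht).differentiableAt (isOpen_ball.mem_nhds hz)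
    rw [← deriv_lownerField_comp hφ (hu t ht)]
    exact hode' z hz t ht
  have hW_zero : deriv (φ 0) z = 1 := by
    rw [(Filter.eventuallyEq_of_mem (isOpen_ball.mem_nhds hz) hid).deriv_eq, deriv_id'']
  have hc : ContinuousOn (fun s => lownerFieldDeriv (k s * φ s z)) (Icc 0 T) := fun t ht =>
    ContinuousAt.comp_continuousWithinAt (f := fun s => k s * φ s z)
      (continuousAt_lownerFieldDeriv (hu t ht)) ((hkcont t ht).mul (hw t ht).continuousWithinAt)
  have hW₀ : ∀ t ∈ Icc 0 T, deriv (φ t) z ≠ 0 := fun t ht =>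
    ne_zero_of_hasDerivWithinAt_smul_self (f := fun s => deriv (φ s) z) hc
      (fun t ht => by simpa only [smul_eq_mul, mul_comm] using hW t ht)
      (by rw [hW_zero]; exact one_ne_zero) ht
  have hanti :=
    antitoneOn_lowner_quantity (convex_Icc 0 T) hp₁.le hp₂.le hkmod hw hW hw₀ hw₁ hW₀
  refine ⟨hanti, ?_⟩
  have hle := hanti ⟨le_rfl, hT.le⟩ ⟨hT.le, le_rfl⟩ hT.le
  simp only [hW_zero, hid z hz, norm_one, Real.one_rpow, one_mul] at hle
  have hz2p : 0 < ‖z‖ ^ (2 * p) := Real.rpow_pos_of_pos (norm_pos_iff.2 hz0) _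
  calc _ = ‖deriv (φ T) z‖ ^ (-p) * ‖φ T z‖ ^ (2 * p) / (1 - ‖φ T z‖ ^ 2) ^ 2
          / ‖z‖ ^ (2 * p) := by
        rw [norm_div, Real.div_rpow (norm_nonneg _) (norm_nonneg _)]
        ring
    _ ≤ ‖z‖ ^ (2 * p) / (1 - ‖z‖ ^ 2) ^ 2 / ‖z‖ ^ (2 * p) := by gcongr
    _ = ((1 - ‖z‖ ^ 2) ^ 2)⁻¹ := by field_simp
end
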